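/- For every u, w ∈ D(A), the derivative of the sabra nonlinearity satisfies |B(u,w) + B(w,u)| ≤ ((C₁ + C₂)/k₁) |Au| |w| with C₁ = |a|(λ^{-1} + λ) + |b|(λ^{-1} + 1) and C₂ = 2|a| + 2λ|b|; moreover there exists a constant C₉ > 0 (depending only on a, b, λ, k₁) such that |A(B(u,w) + B(w,u))| ≤ C₉ |Au| |Aw| for all u, w ∈ D(A). -/

import Mathlib

open scoped ENNReal NNReal


open scoped BigOperators
open MeasureTheory Filter Topology

noncomputable section

namespace Sabra

/-- Wavenumber of the shell with 0-based index `n` (paper index `n+1`): `k₀ λ^(n+1)`. -/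
def kwav (k0 lam : ℝ) (n : ℕ) : ℝ := k0 * lam ^ (n + 1)

/-- Wavenumber for an integer paper index `j`: `k₀ λ^j`. -/
def kz (k0 lam : ℝ) (j : ℤ) : ℝ := k0 * lam ^ j

/-- Extend a sequence `(u₁, u₂, …)` (stored at 0-based indices `0,1,…`) to integer paper
indices, with the convention `u_j = 0` for `j ≤ 0`. -/
def extz (u : ℕ → ℂ) (j : ℤ) : ℂ := if 0 < j then u (j.toNat - 1) else 0

/-- The sabra shell model bilinear map `B(u,v)`, componentwise: the component with 0-based
index `m` corresponds to the paper index `n = m+1`, and equals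
`-i (a k_{n+1} v_{n+2} u*_{n+1} + b k_n v_{n+1} u*_{n-1} + a k_{n-1} u_{n-1} v_{n-2}
  + b k_{n-1} v_{n-1} u_{n-2})`. -/
def sabraB (a b k0 lam : ℝ) (u v : ℕ → ℂ) : ℕ → ℂ := fun m =>
  -Complex.I *
    ((a : ℂ) * (kz k0 lam ((m : ℤ) + 2) : ℂ) * extz v ((m : ℤ) + 3)
        * starRingEnd ℂ (extz u ((m : ℤ) + 2))
      + (b : ℂ) * (kz k0 lam ((m : ℤ) + 1) : ℂ) * extz v ((m : ℤ) + 2)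
        * starRingEnd ℂ (extz u (m : ℤ))
      + (a : ℂ) * (kz k0 lam (m : ℤ) : ℂ) * extz u (m : ℤ) * extz v ((m : ℤ) - 1)
      + (b : ℂ) * (kz k0 lam (m : ℤ) : ℂ) * extz v (m : ℤ) * extz u ((m : ℤ) - 1))

/-- The inner product of `H = ℓ²`: `(u,v) = Σ uₙ vₙ*`. -/
def Hinner (u v : ℕ → ℂ) : ℂ := ∑' n, u n * starRingEnd ℂ (v n)

/-- The norm of `H = ℓ²`. -/
def Hnorm (u : ℕ → ℂ) : ℝ := Real.sqrt (∑' n, ‖u n‖ ^ 2)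

/-- Membership in `H = ℓ²`. -/
def memH (u : ℕ → ℂ) : Prop := Summable (fun n => ‖u n‖ ^ 2)

/-- The norm of `V = D(A^{1/2})`: `‖u‖ = (Σ kₙ² |uₙ|²)^{1/2}`. -/
def Vnorm (k0 lam : ℝ) (u : ℕ → ℂ) : ℝ :=
  Real.sqrt (∑' n, kwav k0 lam n ^ 2 * ‖u n‖ ^ 2)

/-- Membership in `V = D(A^{1/2})`. -/
def memV (k0 lam : ℝ) (u : ℕ → ℂ) : Prop :=
  Summable (fun n => kwav k0 lam n ^ 2 * ‖u n‖ ^ 2)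

/-- The graph norm of `D(A)`: `|Au| = (Σ kₙ⁴ |uₙ|²)^{1/2}`. -/
def DAnorm (k0 lam : ℝ) (u : ℕ → ℂ) : ℝ :=
  Real.sqrt (∑' n, kwav k0 lam n ^ 4 * ‖u n‖ ^ 2)

/-- Membership in `D(A)`. -/
def memDA (k0 lam : ℝ) (u : ℕ → ℂ) : Prop :=
  Summable (fun n => kwav k0 lam n ^ 4 * ‖u n‖ ^ 2)

/-- The dual norm of `V' = D(A^{-1/2})` (for an element of `V'` represented as a sequence
via the `H`-pairing): `(Σ kₙ⁻² |uₙ|²)^{1/2}`. -/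
def VdualNorm (k0 lam : ℝ) (u : ℕ → ℂ) : ℝ :=
  Real.sqrt (∑' n, ‖u n‖ ^ 2 / kwav k0 lam n ^ 2)

/-- The pairing `⟨Au, v⟩ = ((u,v)) = Σ kₙ² uₙ vₙ*`. -/
def Aform (k0 lam : ℝ) (u v : ℕ → ℂ) : ℂ :=
  ∑' n, ((kwav k0 lam n ^ 2 : ℝ) : ℂ) * u n * starRingEnd ℂ (v n)

/-- The constant `C₁ = |a|(λ⁻¹ + λ) + |b|(λ⁻¹ + 1)`. -/
def C1 (a b lam : ℝ) : ℝ := |a| * (lam⁻¹ + lam) + |b| * (lam⁻¹ + 1)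

/-- The Gevrey norm `‖u‖_{G^{p,q}_τ} = (Σ e^{2τ kₙᵖ} kₙ^{2q} |uₙ|²)^{1/2}`. -/
def Gnorm (k0 lam p q τ : ℝ) (u : ℕ → ℂ) : ℝ :=
  Real.sqrt (∑' n, Real.exp (2 * τ * kwav k0 lam n ^ p) * kwav k0 lam n ^ (2 * q) * ‖u n‖ ^ 2)

/-- Membership in the Gevrey class `G^{p,q}_τ`. -/
def memG (k0 lam p q τ : ℝ) (u : ℕ → ℂ) : Prop :=
  Summable (fun n => Real.exp (2 * τ * kwav k0 lam n ^ p) * kwav k0 lam n ^ (2 * q) * ‖u n‖ ^ 2)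

/-- `u : ℝ → (ℕ → ℂ)` is a weak solution of the sabra shell model on `[0,T]` with force `f`
and initial datum `uin`: `u(0) = uin`, `u ∈ L^∞([0,T];H) ∩ L²([0,T];V)`, `u ∈ C([0,T];H)`,
and for every `φ ∈ V` and a.e. `t`, `d/dt (u,φ) + ν⟨Au,φ⟩ + ⟨B(u,u),φ⟩ = ⟨f,φ⟩`. -/
def IsWeakSolutionOn (ν a b k0 lam T : ℝ) (f : ℝ → ℕ → ℂ) (uin : ℕ → ℂ)
    (u : ℝ → ℕ → ℂ) : Prop :=
  u 0 = uin ∧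
  (∀ t ∈ Set.Icc (0 : ℝ) T, memH (u t)) ∧
  (∃ M, ∀ t ∈ Set.Icc (0 : ℝ) T, Hnorm (u t) ≤ M) ∧
  IntegrableOn (fun t => Vnorm k0 lam (u t) ^ 2) (Set.Icc (0 : ℝ) T) ∧
  (∀ φ, memV k0 lam φ →
    ∀ᵐ t ∂(volume.restrict (Set.Ioo (0 : ℝ) T)),
      HasDerivAt (fun s => Hinner (u s) φ)
        (Hinner (f t) φ - (ν : ℂ) * Aform k0 lam (u t) φ
          - Hinner (sabraB a b k0 lam (u t) (u t)) φ) t) ∧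
  (∀ t₀ ∈ Set.Icc (0 : ℝ) T,
    Tendsto (fun t => Hnorm (fun n => u t n - u t₀ n))
      (nhdsWithin t₀ (Set.Icc (0 : ℝ) T)) (nhds 0))

/-- `u : ℝ → (ℕ → ℂ)` is a weak solution of the sabra shell model on `[0,∞)`. -/
def IsWeakSolution (ν a b k0 lam : ℝ) (f : ℝ → ℕ → ℂ) (uin : ℕ → ℂ)
    (u : ℝ → ℕ → ℂ) : Prop :=
  u 0 = uin ∧
  (∀ t, 0 ≤ t → memH (u t)) ∧
  (∀ T > (0 : ℝ), ∃ M, ∀ t ∈ Set.Icc (0 : ℝ) T, Hnorm (u t) ≤ M) ∧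
  (∀ T > (0 : ℝ), IntegrableOn (fun t => Vnorm k0 lam (u t) ^ 2) (Set.Icc (0 : ℝ) T)) ∧
  (∀ φ, memV k0 lam φ →
    ∀ᵐ t ∂(volume.restrict (Set.Ioi (0 : ℝ))),
      HasDerivAt (fun s => Hinner (u s) φ)
        (Hinner (f t) φ - (ν : ℂ) * Aform k0 lam (u t) φ
          - Hinner (sabraB a b k0 lam (u t) (u t)) φ) t) ∧
  (∀ t₀ ∈ Set.Ici (0 : ℝ),
    Tendsto (fun t => Hnorm (fun n => u t n - u t₀ n))
      (nhdsWithin t₀ (Set.Ici (0 : ℝ))) (nhds 0))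

/-- The orthogonal projection onto the span of the first `m` canonical basis vectors. -/
def proj (m : ℕ) (u : ℕ → ℂ) : ℕ → ℂ := fun n => if n < m then u n else 0

/-- The `j`-th shell component in paper (1-based) indexing, with `u_0 = 0`. -/
def shellComp (u : ℕ → ℂ) (j : ℕ) : ℂ := if j = 0 then 0 else u (j - 1)


section aux
variable {k0 lam : ℝ}

lemma kz_pos (hk0 : 0 < k0) (hlam : 1 < lam) (j : ℤ) : 0 < kz k0 lam j := by
  have h : (0:ℝ) < lam := lt_trans one_pos hlam
  unfold kz; positivity

lemma kwav_pos (hk0 : 0 < k0) (hlam : 1 < lam) (n : ℕ) : 0 < kwav k0 lam n := by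
  have h : (0:ℝ) < lam := lt_trans one_pos hlam
  unfold kwav; positivity

lemma kwav_eq_kz (m : ℕ) : kwav k0 lam m = kz k0 lam ((m : ℤ) + 1) := by
  unfold kwav kz
  rw [show ((m : ℤ) + 1) = ((m + 1 : ℕ) : ℤ) by push_cast; ring, zpow_natCast]

lemma kz_toNat (j : ℤ) (hj : 0 < j) : kz k0 lam j = kwav k0 lam (j.toNat - 1) := by
  unfold kz kwav
  rw [show (j.toNat - 1 + 1 : ℕ) = j.toNat by omega,
    show j = ((j.toNat : ℕ) : ℤ) by omega, zpow_natCast]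
  rw [Int.toNat_natCast]

/-- shifted sequences -/
def shifted (g : ℕ → ℝ) (c : ℤ) : ℕ → ℝ :=
  fun n => if 0 < (n : ℤ) + c then g (((n : ℤ) + c).toNat - 1) else 0

lemma shifted_summable_le {g : ℕ → ℝ} (hg0 : ∀ n, 0 ≤ g n) (hg : Summable g) (c : ℤ) :
    Summable (shifted g c) ∧ ∑' n, shifted g c n ≤ ∑' n, g n := by
  rcases le_or_gt 1 c with hc | hc
  · have he : shifted g c = fun n => g (n + (c.toNat - 1)) := by
      funext n
      unfold shifted
      rw [if_pos (by omega)]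
      congr 1
      omega
    rw [he]
    have hs : Summable fun n => g (n + (c.toNat - 1)) :=
      (summable_nat_add_iff (c.toNat - 1)).2 hg
    refine ⟨hs, ?_⟩
    exact Summable.tsum_le_tsum_of_inj (· + (c.toNat - 1)) (add_left_injective _)
      (fun m _ => hg0 m) (fun n => le_refl _) hs hg
  · set d : ℕ := (1 - c).toNat with hd
    have he : shifted g c = fun n => if d ≤ n then g (n - d) else 0 := by
      funext n
      unfold shifted
      by_cases h : d ≤ n
      · rw [if_pos (by omega), if_pos h]
        congr 1
        omega
      · rw [if_neg (by omega), if_neg h]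
    rw [he]
    have hcomp : (fun n => (fun n => if d ≤ n then g (n - d) else 0) (n + d)) = g := by
      funext n
      simp only []
      rw [if_pos (by omega : d ≤ n + d)]
      congr 1
      omega
    have hs : Summable fun n => if d ≤ n then g (n - d) else 0 := by
      rw [← summable_nat_add_iff d, hcomp]; exact hg
    refine ⟨hs, ?_⟩
    have hsum := Summable.sum_add_tsum_nat_add d hs
    have hz : ∑ i ∈ Finset.range d, (if d ≤ i then g (i - d) else 0) = 0 := by
      apply Finset.sum_eq_zero
      intro i hi
      rw [if_neg (by simpa using Finset.mem_range.1 hi |>.not_ge)]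
    rw [← hsum, hz, zero_add]
    calc ∑' (i : ℕ), (if d ≤ i + d then g (i + d - d) else 0) = ∑' n, g n := by rw [hcomp]
    _ ≤ ∑' n, g n := le_refl _

/-- lp bridging -/
lemma memtwo {f : ℕ → ℂ} (hf : Summable fun n => ‖f n‖ ^ 2) :
    Memℓp f (2 : ℝ≥0∞) := by
  apply memℓp_gen
  have h2 : (2 : ℝ≥0∞).toReal = ((2 : ℕ) : ℝ) := by norm_num
  rw [h2]
  simpa [Real.rpow_natCast] using hf

lemma Hnorm_eqlp {f : ℕ → ℂ} (hf : Summable fun n => ‖f n‖ ^ 2) :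
    Hnorm f = ‖(⟨f, memtwo hf⟩ : lp (fun _ : ℕ => ℂ) 2)‖ := by
  rw [lp.norm_eq_tsum_rpow (by norm_num) _]
  unfold Hnorm
  rw [Real.sqrt_eq_rpow]
  have h2 : (2 : ℝ≥0∞).toReal = ((2 : ℕ) : ℝ) := by norm_num
  rw [show (1 : ℝ) / 2 = 1 / (2 : ℝ≥0∞).toReal by rw [h2]; norm_num]
  congr 1
  apply tsum_congr
  intro n
  rw [h2, Real.rpow_natCast]

lemma memH_add {f g : ℕ → ℂ} (hf : Summable fun n => ‖f n‖ ^ 2)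
    (hg : Summable fun n => ‖g n‖ ^ 2) :
    Summable fun n => ‖f n + g n‖ ^ 2 := by
  have h := (memtwo hf).add (memtwo hg)
  have h2 := h.summable (by norm_num : 0 < (2:ℝ≥0∞).toReal)
  have h3 : (2 : ℝ≥0∞).toReal = ((2 : ℕ) : ℝ) := by norm_num
  rw [h3] at h2
  simpa [Real.rpow_natCast] using h2

lemma Hnorm_add_le {f g : ℕ → ℂ} (hf : Summable fun n => ‖f n‖ ^ 2)
    (hg : Summable fun n => ‖g n‖ ^ 2) :
    Hnorm (fun n => f n + g n) ≤ Hnorm f + Hnorm g := by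
  rw [Hnorm_eqlp hf, Hnorm_eqlp hg, Hnorm_eqlp (memH_add hf hg)]
  have h : (⟨fun n => f n + g n, memtwo (memH_add hf hg)⟩ : lp (fun _ : ℕ => ℂ) 2)
      = ⟨f, memtwo hf⟩ + ⟨g, memtwo hg⟩ := rfl
  rw [h]
  exact norm_add_le _ _

lemma Hnorm_congr {f g : ℕ → ℂ} (h : ∀ n, ‖f n‖ = ‖g n‖) : Hnorm f = Hnorm g := by
  unfold Hnorm
  congr 1
  exact tsum_congr fun n => by rw [h n]

lemma Hnorm_le_sqrt {t : ℕ → ℂ} {g : ℕ → ℝ} (h : ∀ n, ‖t n‖ ≤ g n)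
    (hg : Summable fun n => g n ^ 2) :
    (Summable fun n => ‖t n‖ ^ 2) ∧ Hnorm t ≤ Real.sqrt (∑' n, g n ^ 2) := by
  have hle : ∀ n, ‖t n‖ ^ 2 ≤ g n ^ 2 := fun n =>
    pow_le_pow_left₀ (norm_nonneg _) (h n) 2
  have hs : Summable fun n => ‖t n‖ ^ 2 :=
    Summable.of_nonneg_of_le (fun n => sq_nonneg _) hle hg
  exact ⟨hs, Real.sqrt_le_sqrt (Summable.tsum_le_tsum hle hs hg)⟩

lemma Hnorm_add8 {t1 t2 t3 t4 t5 t6 t7 t8 : ℕ → ℂ}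
    (h1 : Summable fun n => ‖t1 n‖ ^ 2) (h2 : Summable fun n => ‖t2 n‖ ^ 2)
    (h3 : Summable fun n => ‖t3 n‖ ^ 2) (h4 : Summable fun n => ‖t4 n‖ ^ 2)
    (h5 : Summable fun n => ‖t5 n‖ ^ 2) (h6 : Summable fun n => ‖t6 n‖ ^ 2)
    (h7 : Summable fun n => ‖t7 n‖ ^ 2) (h8 : Summable fun n => ‖t8 n‖ ^ 2) :
    Hnorm (fun n => t1 n + t2 n + t3 n + t4 n + t5 n + t6 n + t7 n + t8 n) ≤
      Hnorm t1 + Hnorm t2 + Hnorm t3 + Hnorm t4 + Hnorm t5 + Hnorm t6 + Hnorm t7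
        + Hnorm t8 := by
  have s12 := memH_add h1 h2
  have s13 := memH_add s12 h3
  have s14 := memH_add s13 h4
  have s15 := memH_add s14 h5
  have s16 := memH_add s15 h6
  have s17 := memH_add s16 h7
  calc Hnorm (fun n => t1 n + t2 n + t3 n + t4 n + t5 n + t6 n + t7 n + t8 n)
      ≤ Hnorm (fun n => t1 n + t2 n + t3 n + t4 n + t5 n + t6 n + t7 n) + Hnorm t8 :=
        Hnorm_add_le s17 h8
    _ ≤ (Hnorm (fun n => t1 n + t2 n + t3 n + t4 n + t5 n + t6 n) + Hnorm t7) + Hnorm t8 := by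
        have := Hnorm_add_le s16 h7
        linarith
    _ ≤ ((Hnorm (fun n => t1 n + t2 n + t3 n + t4 n + t5 n) + Hnorm t6) + Hnorm t7)
          + Hnorm t8 := by
        have := Hnorm_add_le s15 h6
        linarith
    _ ≤ (((Hnorm (fun n => t1 n + t2 n + t3 n + t4 n) + Hnorm t5) + Hnorm t6) + Hnorm t7)
          + Hnorm t8 := by
        have := Hnorm_add_le s14 h5
        linarith
    _ ≤ ((((Hnorm (fun n => t1 n + t2 n + t3 n) + Hnorm t4) + Hnorm t5) + Hnorm t6)
          + Hnorm t7) + Hnorm t8 := by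
        have := Hnorm_add_le s13 h4
        linarith
    _ ≤ (((((Hnorm (fun n => t1 n + t2 n) + Hnorm t3) + Hnorm t4) + Hnorm t5) + Hnorm t6)
          + Hnorm t7) + Hnorm t8 := by
        have := Hnorm_add_le s12 h3
        linarith
    _ ≤ Hnorm t1 + Hnorm t2 + Hnorm t3 + Hnorm t4 + Hnorm t5 + Hnorm t6 + Hnorm t7
          + Hnorm t8 := by
        have := Hnorm_add_le h1 h2
        linarith

/-- pointwise bound from the D(A) norm -/
lemma extz_le (hk0 : 0 < k0) (hlam : 1 < lam) {u : ℕ → ℂ} (hu : memDA k0 lam u) (j : ℤ) :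
    kz k0 lam j ^ 2 * ‖extz u j‖ ≤ DAnorm k0 lam u := by
  unfold extz
  split_ifs with h
  · rw [kz_toNat j h]
    set n := j.toNat - 1 with hn
    have hkp := kwav_pos hk0 hlam n
    have key : (kwav k0 lam n ^ 2 * ‖u n‖) ^ 2 ≤ ∑' m, kwav k0 lam m ^ 4 * ‖u m‖ ^ 2 := by
      have h1 := Summable.le_tsum hu n (fun m _ => by positivity)
      calc (kwav k0 lam n ^ 2 * ‖u n‖) ^ 2 = kwav k0 lam n ^ 4 * ‖u n‖ ^ 2 := by ring
        _ ≤ _ := h1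
    have h0 : 0 ≤ kwav k0 lam n ^ 2 * ‖u n‖ := by positivity
    calc kwav k0 lam n ^ 2 * ‖u n‖
        = Real.sqrt ((kwav k0 lam n ^ 2 * ‖u n‖) ^ 2) := (Real.sqrt_sq h0).symm
      _ ≤ DAnorm k0 lam u := Real.sqrt_le_sqrt key
  · simp only [norm_zero, mul_zero]
    exact Real.sqrt_nonneg _

lemma extz_pos_of_ne {u : ℕ → ℂ} {j : ℤ} (h : extz u j ≠ 0) : 1 ≤ j := by
  by_contra hc
  exact h (by unfold extz; rw [if_neg (by omega)])

lemma memH_of_memDA (hk0 : 0 < k0) (hlam : 1 < lam) {w : ℕ → ℂ} (hw : memDA k0 lam w) :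
    Summable fun n => ‖w n‖ ^ 2 := by
  have hl0 : (0:ℝ) < lam := lt_trans one_pos hlam
  apply Summable.of_nonneg_of_le (fun n => sq_nonneg _) ?_ (hw.mul_left ((k0 * lam) ^ 4)⁻¹)
  intro n
  have h1 : k0 * lam ≤ kwav k0 lam n := by
    unfold kwav
    exact mul_le_mul_of_nonneg_left (le_self_pow₀ hlam.le (Nat.succ_ne_zero n)) hk0.le
  have h2 : (k0 * lam) ^ 4 ≤ kwav k0 lam n ^ 4 :=
    pow_le_pow_left₀ (by positivity) h1 4
  rw [inv_mul_eq_div, le_div_iff₀ (by positivity)]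
  calc ‖w n‖ ^ 2 * (k0 * lam) ^ 4 ≤ ‖w n‖ ^ 2 * kwav k0 lam n ^ 4 := by
        exact mul_le_mul_of_nonneg_left h2 (sq_nonneg _)
    _ = kwav k0 lam n ^ 4 * ‖w n‖ ^ 2 := by ring

lemma DAnorm_eq_Hnorm (hk0 : 0 < k0) (hlam : 1 < lam) (f : ℕ → ℂ) :
    DAnorm k0 lam f = Hnorm (fun m => ((kwav k0 lam m ^ 2 : ℝ) : ℂ) * f m) := by
  have hl0 : (0:ℝ) < lam := lt_trans one_pos hlam
  unfold DAnorm Hnorm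
  congr 1
  apply tsum_congr
  intro n
  rw [norm_mul, Complex.norm_real, Real.norm_eq_abs, abs_of_nonneg (by positivity), mul_pow]
  ring

/-- zpow ratio lemmas -/
lemma kz_ratio1 (hk0 : 0 < k0) (hlam : 1 < lam) {x y p : ℤ} (h : x + 1 ≤ p + 2 * y) :
    kz k0 lam x * (k0 * lam) ≤ lam ^ p * kz k0 lam y ^ 2 := by
  have hl0 : (0:ℝ) < lam := lt_trans one_pos hlam
  unfold kz
  have e1 : k0 * lam ^ x * (k0 * lam) = k0 ^ 2 * lam ^ (x + 1) := by
    simp only [zpow_add₀ hl0.ne', zpow_one]; ring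
  have e2 : lam ^ p * (k0 * lam ^ y) ^ 2 = k0 ^ 2 * lam ^ (p + (y + y)) := by
    simp only [zpow_add₀ hl0.ne', zpow_one]; ring
  rw [e1, e2]
  exact mul_le_mul_of_nonneg_left (zpow_le_zpow_right₀ hlam.le (by omega)) (by positivity)

lemma kz_ratio2 (hk0 : 0 < k0) (hlam : 1 < lam) {x s y z : ℤ}
    (h : 2 * x + s ≤ 4 + 2 * y + 2 * z) :
    kz k0 lam x ^ 2 * kz k0 lam s * k0 ≤ lam ^ (4 : ℤ) * (kz k0 lam y ^ 2 * kz k0 lam z ^ 2) := by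
  have hl0 : (0:ℝ) < lam := lt_trans one_pos hlam
  unfold kz
  have e1 : (k0 * lam ^ x) ^ 2 * (k0 * lam ^ s) * k0 = k0 ^ 4 * lam ^ (x + x + s) := by
    simp only [zpow_add₀ hl0.ne', zpow_one]; ring
  have e2 : lam ^ (4:ℤ) * ((k0 * lam ^ y) ^ 2 * (k0 * lam ^ z) ^ 2)
      = k0 ^ 4 * lam ^ ((4:ℤ) + (y + y + (z + z))) := by
    simp only [zpow_add₀ hl0.ne', zpow_one]; ring
  rw [e1, e2]
  exact mul_le_mul_of_nonneg_left (zpow_le_zpow_right₀ hlam.le (by omega)) (by positivity)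

/-- Generic single-term estimate for the H-norm bound. -/
lemma term_est (hk0 : 0 < k0) (hlam : 1 < lam) (u w : ℕ → ℂ)
    (hu : memDA k0 lam u) (hw : Summable fun n => ‖w n‖ ^ 2)
    (t : ℕ → ℂ) (co : ℝ) (s d c p : ℤ)
    (ht : ∀ m : ℕ, ‖t m‖ = |co| * kz k0 lam ((m : ℤ) + s) *
      (‖extz u ((m : ℤ) + d)‖ * ‖extz w ((m : ℤ) + c)‖))
    (hp : ∀ m : ℕ, 1 ≤ (m : ℤ) + d → 1 ≤ (m : ℤ) + c →
      (m : ℤ) + s + 1 ≤ p + 2 * ((m : ℤ) + d)) :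
    (Summable fun m => ‖t m‖ ^ 2) ∧
      Hnorm t ≤ |co| * lam ^ p / (k0 * lam) * DAnorm k0 lam u * Hnorm w := by
  have hl0 : (0:ℝ) < lam := lt_trans one_pos hlam
  have hDA : (0:ℝ) ≤ DAnorm k0 lam u := Real.sqrt_nonneg _
  have hq0 : (0:ℝ) ≤ |co| * lam ^ p / (k0 * lam) := by positivity
  have hk : (0:ℝ) < k0 * lam := by positivity
  have hbound : ∀ m : ℕ, ‖t m‖ ≤
      |co| * lam ^ p / (k0 * lam) * DAnorm k0 lam u * ‖extz w ((m : ℤ) + c)‖ := by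
    intro m
    rw [ht m]
    by_cases hzu : extz u ((m : ℤ) + d) = 0
    · rw [hzu]
      simp only [norm_zero, zero_mul, mul_zero]
      exact mul_nonneg (mul_nonneg hq0 hDA) (norm_nonneg _)
    by_cases hzw : extz w ((m : ℤ) + c) = 0
    · rw [hzw]
      simp only [norm_zero, mul_zero]
      exact le_refl 0
    have hdu : 1 ≤ (m : ℤ) + d := extz_pos_of_ne hzu
    have hdw : 1 ≤ (m : ℤ) + c := extz_pos_of_ne hzw
    have h1 : kz k0 lam ((m : ℤ) + s) * (k0 * lam) ≤ lam ^ p * kz k0 lam ((m : ℤ) + d) ^ 2 :=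
      kz_ratio1 hk0 hlam (hp m hdu hdw)
    have h2 : kz k0 lam ((m : ℤ) + d) ^ 2 * ‖extz u ((m : ℤ) + d)‖ ≤ DAnorm k0 lam u :=
      extz_le hk0 hlam hu _
    have hrw : |co| * lam ^ p / (k0 * lam) * DAnorm k0 lam u * ‖extz w ((m : ℤ) + c)‖
        = |co| * lam ^ p * DAnorm k0 lam u * ‖extz w ((m : ℤ) + c)‖ / (k0 * lam) := by
      ring
    rw [hrw, le_div_iff₀ hk]
    have hlp : (0:ℝ) < lam ^ p := by positivity
    calc |co| * kz k0 lam ((m : ℤ) + s) *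
          (‖extz u ((m : ℤ) + d)‖ * ‖extz w ((m : ℤ) + c)‖) * (k0 * lam)
        = |co| * (kz k0 lam ((m : ℤ) + s) * (k0 * lam) * ‖extz u ((m : ℤ) + d)‖) *
            ‖extz w ((m : ℤ) + c)‖ := by ring
      _ ≤ |co| * (lam ^ p * kz k0 lam ((m : ℤ) + d) ^ 2 * ‖extz u ((m : ℤ) + d)‖) *
            ‖extz w ((m : ℤ) + c)‖ := by
          gcongr
      _ = |co| * lam ^ p * (kz k0 lam ((m : ℤ) + d) ^ 2 * ‖extz u ((m : ℤ) + d)‖) *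
            ‖extz w ((m : ℤ) + c)‖ := by ring
      _ ≤ |co| * lam ^ p * DAnorm k0 lam u * ‖extz w ((m : ℤ) + c)‖ := by
          gcongr
  obtain ⟨hsh, hshle⟩ := shifted_summable_le (fun n => sq_nonneg (‖w n‖)) hw c
  have hgsq : ∀ m : ℕ,
      (|co| * lam ^ p / (k0 * lam) * DAnorm k0 lam u * ‖extz w ((m : ℤ) + c)‖) ^ 2
        = (|co| * lam ^ p / (k0 * lam) * DAnorm k0 lam u) ^ 2 *
            shifted (fun n => ‖w n‖ ^ 2) c m := by
    intro m
    have he : ‖extz w ((m : ℤ) + c)‖ ^ 2 = shifted (fun n => ‖w n‖ ^ 2) c m := by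
      unfold extz shifted
      split_ifs
      · rfl
      · simp
    rw [← he]
    ring
  have hgs : Summable fun m : ℕ =>
      (|co| * lam ^ p / (k0 * lam) * DAnorm k0 lam u * ‖extz w ((m : ℤ) + c)‖) ^ 2 := by
    have h' := hsh.mul_left ((|co| * lam ^ p / (k0 * lam) * DAnorm k0 lam u) ^ 2)
    exact h'.congr (fun m => (hgsq m).symm)
  obtain ⟨hts, htle⟩ := Hnorm_le_sqrt hbound hgs
  refine ⟨hts, htle.trans ?_⟩
  have hsum : ∑' m : ℕ, (|co| * lam ^ p / (k0 * lam) * DAnorm k0 lam u * ‖extz w ((m : ℤ) + c)‖) ^ 2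
      ≤ (|co| * lam ^ p / (k0 * lam) * DAnorm k0 lam u) ^ 2 * ∑' n, ‖w n‖ ^ 2 := by
    calc ∑' m : ℕ, (|co| * lam ^ p / (k0 * lam) * DAnorm k0 lam u * ‖extz w ((m : ℤ) + c)‖) ^ 2
        = ∑' m : ℕ, (|co| * lam ^ p / (k0 * lam) * DAnorm k0 lam u) ^ 2 *
            shifted (fun n => ‖w n‖ ^ 2) c m := tsum_congr hgsq
      _ = (|co| * lam ^ p / (k0 * lam) * DAnorm k0 lam u) ^ 2 *
            ∑' m, shifted (fun n => ‖w n‖ ^ 2) c m := tsum_mul_left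
      _ ≤ _ := mul_le_mul_of_nonneg_left hshle (by positivity)
  calc Real.sqrt (∑' m : ℕ,
        (|co| * lam ^ p / (k0 * lam) * DAnorm k0 lam u * ‖extz w ((m : ℤ) + c)‖) ^ 2)
      ≤ Real.sqrt ((|co| * lam ^ p / (k0 * lam) * DAnorm k0 lam u) ^ 2 * ∑' n, ‖w n‖ ^ 2) :=
        Real.sqrt_le_sqrt hsum
    _ = |co| * lam ^ p / (k0 * lam) * DAnorm k0 lam u * Real.sqrt (∑' n, ‖w n‖ ^ 2) := by
        rw [Real.sqrt_mul (sq_nonneg _), Real.sqrt_sq (by positivity)]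
    _ = |co| * lam ^ p / (k0 * lam) * DAnorm k0 lam u * Hnorm w := rfl

/-- Generic single-term estimate for the D(A)-norm bound. -/
lemma term_est2 (hk0 : 0 < k0) (hlam : 1 < lam) (u w : ℕ → ℂ)
    (hu : memDA k0 lam u) (hw : memDA k0 lam w)
    (t : ℕ → ℂ) (co : ℝ) (s d c : ℤ)
    (ht : ∀ m : ℕ, ‖t m‖ = |co| * (kz k0 lam ((m : ℤ) + 1) ^ 2 * kz k0 lam ((m : ℤ) + s)) *
      (‖extz u ((m : ℤ) + d)‖ * ‖extz w ((m : ℤ) + c)‖))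
    (hp : ∀ m : ℕ, 2 * ((m : ℤ) + 1) + ((m : ℤ) + s) ≤ 4 + 2 * ((m : ℤ) + d) +
      2 * ((m : ℤ) + c)) :
    (Summable fun m => ‖t m‖ ^ 2) ∧
      Hnorm t ≤ |co| * lam ^ (4 : ℤ) / k0 * DAnorm k0 lam u * DAnorm k0 lam w := by
  have hl0 : (0:ℝ) < lam := lt_trans one_pos hlam
  have hDA : (0:ℝ) ≤ DAnorm k0 lam u := Real.sqrt_nonneg _
  have hq0 : (0:ℝ) ≤ |co| * lam ^ (4:ℤ) / k0 := by positivity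
  have hbound : ∀ m : ℕ, ‖t m‖ ≤ |co| * lam ^ (4:ℤ) / k0 * DAnorm k0 lam u *
      (kz k0 lam ((m : ℤ) + c) ^ 2 * ‖extz w ((m : ℤ) + c)‖) := by
    intro m
    rw [ht m]
    have h1 : kz k0 lam ((m : ℤ) + 1) ^ 2 * kz k0 lam ((m : ℤ) + s) * k0 ≤
        lam ^ (4:ℤ) * (kz k0 lam ((m : ℤ) + d) ^ 2 * kz k0 lam ((m : ℤ) + c) ^ 2) :=
      kz_ratio2 hk0 hlam (by have := hp m; omega)
    have h2 : kz k0 lam ((m : ℤ) + d) ^ 2 * ‖extz u ((m : ℤ) + d)‖ ≤ DAnorm k0 lam u :=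
      extz_le hk0 hlam hu _
    have hrw : |co| * lam ^ (4:ℤ) / k0 * DAnorm k0 lam u *
        (kz k0 lam ((m : ℤ) + c) ^ 2 * ‖extz w ((m : ℤ) + c)‖)
        = |co| * lam ^ (4:ℤ) * DAnorm k0 lam u *
            (kz k0 lam ((m : ℤ) + c) ^ 2 * ‖extz w ((m : ℤ) + c)‖) / k0 := by ring
    rw [hrw, le_div_iff₀ hk0]
    have hlp : (0:ℝ) < lam ^ (4:ℤ) := by positivity
    have hkc : (0:ℝ) < kz k0 lam ((m : ℤ) + c) ^ 2 := by
      have := kz_pos hk0 hlam ((m : ℤ) + c); positivity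
    calc |co| * (kz k0 lam ((m : ℤ) + 1) ^ 2 * kz k0 lam ((m : ℤ) + s)) *
          (‖extz u ((m : ℤ) + d)‖ * ‖extz w ((m : ℤ) + c)‖) * k0
        = |co| * (kz k0 lam ((m : ℤ) + 1) ^ 2 * kz k0 lam ((m : ℤ) + s) * k0 *
            ‖extz u ((m : ℤ) + d)‖) * ‖extz w ((m : ℤ) + c)‖ := by ring
      _ ≤ |co| * (lam ^ (4:ℤ) * (kz k0 lam ((m : ℤ) + d) ^ 2 * kz k0 lam ((m : ℤ) + c) ^ 2) *
            ‖extz u ((m : ℤ) + d)‖) * ‖extz w ((m : ℤ) + c)‖ := by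
          gcongr
      _ = |co| * lam ^ (4:ℤ) * kz k0 lam ((m : ℤ) + c) ^ 2 *
            (kz k0 lam ((m : ℤ) + d) ^ 2 * ‖extz u ((m : ℤ) + d)‖) *
            ‖extz w ((m : ℤ) + c)‖ := by ring
      _ ≤ |co| * lam ^ (4:ℤ) * kz k0 lam ((m : ℤ) + c) ^ 2 * DAnorm k0 lam u *
            ‖extz w ((m : ℤ) + c)‖ := by
          gcongr
      _ = |co| * lam ^ (4:ℤ) * DAnorm k0 lam u *
            (kz k0 lam ((m : ℤ) + c) ^ 2 * ‖extz w ((m : ℤ) + c)‖) := by ring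
  obtain ⟨hsh, hshle⟩ := shifted_summable_le
    (fun n => by positivity : ∀ n, (0:ℝ) ≤ kwav k0 lam n ^ 4 * ‖w n‖ ^ 2) hw c
  have hgsq : ∀ m : ℕ,
      (|co| * lam ^ (4:ℤ) / k0 * DAnorm k0 lam u *
        (kz k0 lam ((m : ℤ) + c) ^ 2 * ‖extz w ((m : ℤ) + c)‖)) ^ 2
      = (|co| * lam ^ (4:ℤ) / k0 * DAnorm k0 lam u) ^ 2 *
          shifted (fun n => kwav k0 lam n ^ 4 * ‖w n‖ ^ 2) c m := by
    intro m
    have he : (kz k0 lam ((m : ℤ) + c) ^ 2 * ‖extz w ((m : ℤ) + c)‖) ^ 2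
        = shifted (fun n => kwav k0 lam n ^ 4 * ‖w n‖ ^ 2) c m := by
      unfold extz shifted
      split_ifs with h
      · rw [kz_toNat _ h]
        ring
      · simp
    rw [← he]
    ring
  have hgs : Summable fun m : ℕ =>
      (|co| * lam ^ (4:ℤ) / k0 * DAnorm k0 lam u *
        (kz k0 lam ((m : ℤ) + c) ^ 2 * ‖extz w ((m : ℤ) + c)‖)) ^ 2 := by
    have h' := hsh.mul_left ((|co| * lam ^ (4:ℤ) / k0 * DAnorm k0 lam u) ^ 2)
    exact h'.congr (fun m => (hgsq m).symm)
  obtain ⟨hts, htle⟩ := Hnorm_le_sqrt hbound hgs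
  refine ⟨hts, htle.trans ?_⟩
  have hsum : ∑' m : ℕ, (|co| * lam ^ (4:ℤ) / k0 * DAnorm k0 lam u *
      (kz k0 lam ((m : ℤ) + c) ^ 2 * ‖extz w ((m : ℤ) + c)‖)) ^ 2
      ≤ (|co| * lam ^ (4:ℤ) / k0 * DAnorm k0 lam u) ^ 2 *
          ∑' n, kwav k0 lam n ^ 4 * ‖w n‖ ^ 2 := by
    calc ∑' m : ℕ, (|co| * lam ^ (4:ℤ) / k0 * DAnorm k0 lam u *
          (kz k0 lam ((m : ℤ) + c) ^ 2 * ‖extz w ((m : ℤ) + c)‖)) ^ 2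
        = ∑' m : ℕ, (|co| * lam ^ (4:ℤ) / k0 * DAnorm k0 lam u) ^ 2 *
            shifted (fun n => kwav k0 lam n ^ 4 * ‖w n‖ ^ 2) c m := tsum_congr hgsq
      _ = (|co| * lam ^ (4:ℤ) / k0 * DAnorm k0 lam u) ^ 2 *
            ∑' m, shifted (fun n => kwav k0 lam n ^ 4 * ‖w n‖ ^ 2) c m := tsum_mul_left
      _ ≤ _ := mul_le_mul_of_nonneg_left hshle (by positivity)
  calc Real.sqrt (∑' m : ℕ, (|co| * lam ^ (4:ℤ) / k0 * DAnorm k0 lam u *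
        (kz k0 lam ((m : ℤ) + c) ^ 2 * ‖extz w ((m : ℤ) + c)‖)) ^ 2)
      ≤ Real.sqrt ((|co| * lam ^ (4:ℤ) / k0 * DAnorm k0 lam u) ^ 2 *
          ∑' n, kwav k0 lam n ^ 4 * ‖w n‖ ^ 2) := Real.sqrt_le_sqrt hsum
    _ = |co| * lam ^ (4:ℤ) / k0 * DAnorm k0 lam u *
          Real.sqrt (∑' n, kwav k0 lam n ^ 4 * ‖w n‖ ^ 2) := by
        rw [Real.sqrt_mul (sq_nonneg _), Real.sqrt_sq (by positivity)]
    _ = |co| * lam ^ (4:ℤ) / k0 * DAnorm k0 lam u * DAnorm k0 lam w := rfl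

end aux

/-- estimates for the derivative of the nonlinearity
`R'(u)w = B(u,w) + B(w,u)`: for all `u, w ∈ D(A)`,
`|B(u,w) + B(w,u)| ≤ ((C₁+C₂)/k₁)|Au||w|` with `C₂ = 2|a| + 2λ|b|`, `k₁ = k₀λ`, and there
is `C₉ > 0` (depending only on `a, b, λ, k₁`) with `|A(B(u,w)+B(w,u))| ≤ C₉|Au||Aw|`. -/
theorem sabra_nonlinearity_derivative_estimates
    (a b k0 lam : ℝ) (hk0 : 0 < k0) (hlam : 1 < lam) :
    (∀ u w, memDA k0 lam u → memDA k0 lam w →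
      Hnorm (fun n => sabraB a b k0 lam u w n + sabraB a b k0 lam w u n) ≤
        ((C1 a b lam + (2 * |a| + 2 * lam * |b|)) / (k0 * lam)) *
          DAnorm k0 lam u * Hnorm w) ∧
    (∃ C9 > (0 : ℝ), ∀ u w, memDA k0 lam u → memDA k0 lam w →
      DAnorm k0 lam (fun n => sabraB a b k0 lam u w n + sabraB a b k0 lam w u n) ≤
        C9 * DAnorm k0 lam u * DAnorm k0 lam w) := by

  have hl0 : (0:ℝ) < lam := lt_trans one_pos hlam
  have habs : ∀ j : ℤ, |kz k0 lam j| = kz k0 lam j :=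
    fun j => abs_of_pos (kz_pos hk0 hlam j)
  constructor
  · -- first estimate
    intro u w hu hw
    have hwH := memH_of_memDA hk0 hlam hw
    set T1 : ℕ → ℂ := fun m => (a : ℂ) * (kz k0 lam ((m : ℤ) + 2) : ℂ) *
      extz w ((m : ℤ) + 3) * starRingEnd ℂ (extz u ((m : ℤ) + 2)) with hT1
    set T2 : ℕ → ℂ := fun m => (b : ℂ) * (kz k0 lam ((m : ℤ) + 1) : ℂ) *
      extz w ((m : ℤ) + 2) * starRingEnd ℂ (extz u (m : ℤ)) with hT2
    set T3 : ℕ → ℂ := fun m => (a : ℂ) * (kz k0 lam (m : ℤ) : ℂ) *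
      extz u (m : ℤ) * extz w ((m : ℤ) - 1) with hT3
    set T4 : ℕ → ℂ := fun m => (b : ℂ) * (kz k0 lam (m : ℤ) : ℂ) *
      extz w (m : ℤ) * extz u ((m : ℤ) - 1) with hT4
    set T5 : ℕ → ℂ := fun m => (a : ℂ) * (kz k0 lam ((m : ℤ) + 2) : ℂ) *
      extz u ((m : ℤ) + 3) * starRingEnd ℂ (extz w ((m : ℤ) + 2)) with hT5
    set T6 : ℕ → ℂ := fun m => (b : ℂ) * (kz k0 lam ((m : ℤ) + 1) : ℂ) *
      extz u ((m : ℤ) + 2) * starRingEnd ℂ (extz w (m : ℤ)) with hT6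
    set T7 : ℕ → ℂ := fun m => (a : ℂ) * (kz k0 lam (m : ℤ) : ℂ) *
      extz w (m : ℤ) * extz u ((m : ℤ) - 1) with hT7
    set T8 : ℕ → ℂ := fun m => (b : ℂ) * (kz k0 lam (m : ℤ) : ℂ) *
      extz u (m : ℤ) * extz w ((m : ℤ) - 1) with hT8
    obtain ⟨s1, b1⟩ := term_est hk0 hlam u w hu hwH T1 a 2 2 3 (-1)
      (by intro m; rw [hT1]
          simp [norm_mul, Complex.norm_real, Real.norm_eq_abs, RCLike.norm_conj, habs]
          ring)
      (by intro m h1 h2; omega)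
    obtain ⟨s2, b2⟩ := term_est hk0 hlam u w hu hwH T2 b 1 0 2 1
      (by intro m; rw [hT2, show (m : ℤ) + 0 = (m : ℤ) by ring]
          simp [norm_mul, Complex.norm_real, Real.norm_eq_abs, RCLike.norm_conj, habs]
          ring)
      (by intro m h1 h2; omega)
    obtain ⟨s3, b3⟩ := term_est hk0 hlam u w hu hwH T3 a 0 0 (-1) (-1)
      (by intro m; rw [hT3, show (m : ℤ) + 0 = (m : ℤ) by ring,
            show (m : ℤ) + (-1) = (m : ℤ) - 1 by ring]
          simp [norm_mul, Complex.norm_real, Real.norm_eq_abs, RCLike.norm_conj, habs]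
          ring)
      (by intro m h1 h2; omega)
    obtain ⟨s4, b4⟩ := term_est hk0 hlam u w hu hwH T4 b 0 (-1) 0 1
      (by intro m; rw [hT4, show (m : ℤ) + 0 = (m : ℤ) by ring,
            show (m : ℤ) + (-1) = (m : ℤ) - 1 by ring]
          simp [norm_mul, Complex.norm_real, Real.norm_eq_abs, RCLike.norm_conj, habs]
          ring)
      (by intro m h1 h2; omega)
    obtain ⟨s5, b5⟩ := term_est hk0 hlam u w hu hwH T5 a 2 3 2 (-1)
      (by intro m; rw [hT5]
          simp [norm_mul, Complex.norm_real, Real.norm_eq_abs, RCLike.norm_conj, habs]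
          ring)
      (by intro m h1 h2; omega)
    obtain ⟨s6, b6⟩ := term_est hk0 hlam u w hu hwH T6 b 1 2 0 (-1)
      (by intro m; rw [hT6, show (m : ℤ) + 0 = (m : ℤ) by ring]
          simp [norm_mul, Complex.norm_real, Real.norm_eq_abs, RCLike.norm_conj, habs]
          ring)
      (by intro m h1 h2; omega)
    obtain ⟨s7, b7⟩ := term_est hk0 hlam u w hu hwH T7 a 0 (-1) 0 1
      (by intro m; rw [hT7, show (m : ℤ) + 0 = (m : ℤ) by ring,
            show (m : ℤ) + (-1) = (m : ℤ) - 1 by ring]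
          simp [norm_mul, Complex.norm_real, Real.norm_eq_abs, RCLike.norm_conj, habs]
          ring)
      (by intro m h1 h2; omega)
    obtain ⟨s8, b8⟩ := term_est hk0 hlam u w hu hwH T8 b 0 0 (-1) (-1)
      (by intro m; rw [hT8, show (m : ℤ) + 0 = (m : ℤ) by ring,
            show (m : ℤ) + (-1) = (m : ℤ) - 1 by ring]
          simp [norm_mul, Complex.norm_real, Real.norm_eq_abs, RCLike.norm_conj, habs]
          ring)
      (by intro m h1 h2; omega)
    have hnorm_eq : Hnorm (fun n => sabraB a b k0 lam u w n + sabraB a b k0 lam w u n)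
        = Hnorm (fun m => T1 m + T2 m + T3 m + T4 m + T5 m + T6 m + T7 m + T8 m) := by
      apply Hnorm_congr
      intro m
      have hd : sabraB a b k0 lam u w m + sabraB a b k0 lam w u m
          = -Complex.I * (T1 m + T2 m + T3 m + T4 m + T5 m + T6 m + T7 m + T8 m) := by
        rw [hT1, hT2, hT3, hT4, hT5, hT6, hT7, hT8]
        unfold sabraB
        ring
      rw [hd, norm_mul]
      simp
    rw [hnorm_eq]
    have hinv : lam⁻¹ ≤ 1 := by
      rw [inv_eq_one_div, div_le_one hl0]; exact hlam.le
    have hnum : |a| * lam ^ (-1:ℤ) + |b| * lam ^ (1:ℤ) + |a| * lam ^ (-1:ℤ)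
        + |b| * lam ^ (1:ℤ) + |a| * lam ^ (-1:ℤ) + |b| * lam ^ (-1:ℤ)
        + |a| * lam ^ (1:ℤ) + |b| * lam ^ (-1:ℤ)
        ≤ C1 a b lam + (2 * |a| + 2 * lam * |b|) := by
      have hz1 : lam ^ (-1:ℤ) = lam⁻¹ := by rw [zpow_neg, zpow_one]
      have hz2 : lam ^ (1:ℤ) = lam := zpow_one lam
      have h1 : |a| * lam⁻¹ ≤ |a| * 1 := mul_le_mul_of_nonneg_left hinv (abs_nonneg a)
      have h2 : |b| * lam⁻¹ ≤ |b| * 1 := mul_le_mul_of_nonneg_left hinv (abs_nonneg b)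
      rw [hz1, hz2]
      unfold C1
      nlinarith [abs_nonneg a, abs_nonneg b]
    calc Hnorm (fun m => T1 m + T2 m + T3 m + T4 m + T5 m + T6 m + T7 m + T8 m)
        ≤ Hnorm T1 + Hnorm T2 + Hnorm T3 + Hnorm T4 + Hnorm T5 + Hnorm T6 + Hnorm T7
            + Hnorm T8 := Hnorm_add8 s1 s2 s3 s4 s5 s6 s7 s8
      _ ≤ |a| * lam ^ (-1:ℤ) / (k0 * lam) * DAnorm k0 lam u * Hnorm w
          + |b| * lam ^ (1:ℤ) / (k0 * lam) * DAnorm k0 lam u * Hnorm w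
          + |a| * lam ^ (-1:ℤ) / (k0 * lam) * DAnorm k0 lam u * Hnorm w
          + |b| * lam ^ (1:ℤ) / (k0 * lam) * DAnorm k0 lam u * Hnorm w
          + |a| * lam ^ (-1:ℤ) / (k0 * lam) * DAnorm k0 lam u * Hnorm w
          + |b| * lam ^ (-1:ℤ) / (k0 * lam) * DAnorm k0 lam u * Hnorm w
          + |a| * lam ^ (1:ℤ) / (k0 * lam) * DAnorm k0 lam u * Hnorm w
          + |b| * lam ^ (-1:ℤ) / (k0 * lam) * DAnorm k0 lam u * Hnorm w := by
          exact add_le_add (add_le_add (add_le_add (add_le_add (add_le_add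
            (add_le_add (add_le_add b1 b2) b3) b4) b5) b6) b7) b8
      _ = ((|a| * lam ^ (-1:ℤ) + |b| * lam ^ (1:ℤ) + |a| * lam ^ (-1:ℤ)
            + |b| * lam ^ (1:ℤ) + |a| * lam ^ (-1:ℤ) + |b| * lam ^ (-1:ℤ)
            + |a| * lam ^ (1:ℤ) + |b| * lam ^ (-1:ℤ)) / (k0 * lam))
            * (DAnorm k0 lam u * Hnorm w) := by ring
      _ ≤ ((C1 a b lam + (2 * |a| + 2 * lam * |b|)) / (k0 * lam))
            * (DAnorm k0 lam u * Hnorm w) := by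
          apply mul_le_mul_of_nonneg_right ?_
            (mul_nonneg (Real.sqrt_nonneg _) (Real.sqrt_nonneg _))
          have hkpos : (0:ℝ) < k0 * lam := by positivity
          exact div_le_div_of_nonneg_right hnum hkpos.le
      _ = ((C1 a b lam + (2 * |a| + 2 * lam * |b|)) / (k0 * lam))
            * DAnorm k0 lam u * Hnorm w := by ring
  · -- second estimate
    refine ⟨(4 * |a| + 4 * |b| + 1) * lam ^ (4:ℤ) / k0, by positivity, ?_⟩
    intro u w hu hw
    rw [DAnorm_eq_Hnorm hk0 hlam]
    set G1 : ℕ → ℂ := fun m => ((kwav k0 lam m ^ 2 : ℝ) : ℂ) * ((a : ℂ) *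
      (kz k0 lam ((m : ℤ) + 2) : ℂ) * extz w ((m : ℤ) + 3) *
      starRingEnd ℂ (extz u ((m : ℤ) + 2))) with hG1
    set G2 : ℕ → ℂ := fun m => ((kwav k0 lam m ^ 2 : ℝ) : ℂ) * ((b : ℂ) *
      (kz k0 lam ((m : ℤ) + 1) : ℂ) * extz w ((m : ℤ) + 2) *
      starRingEnd ℂ (extz u (m : ℤ))) with hG2
    set G3 : ℕ → ℂ := fun m => ((kwav k0 lam m ^ 2 : ℝ) : ℂ) * ((a : ℂ) *
      (kz k0 lam (m : ℤ) : ℂ) * extz u (m : ℤ) * extz w ((m : ℤ) - 1)) with hG3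
    set G4 : ℕ → ℂ := fun m => ((kwav k0 lam m ^ 2 : ℝ) : ℂ) * ((b : ℂ) *
      (kz k0 lam (m : ℤ) : ℂ) * extz w (m : ℤ) * extz u ((m : ℤ) - 1)) with hG4
    set G5 : ℕ → ℂ := fun m => ((kwav k0 lam m ^ 2 : ℝ) : ℂ) * ((a : ℂ) *
      (kz k0 lam ((m : ℤ) + 2) : ℂ) * extz u ((m : ℤ) + 3) *
      starRingEnd ℂ (extz w ((m : ℤ) + 2))) with hG5
    set G6 : ℕ → ℂ := fun m => ((kwav k0 lam m ^ 2 : ℝ) : ℂ) * ((b : ℂ) *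
      (kz k0 lam ((m : ℤ) + 1) : ℂ) * extz u ((m : ℤ) + 2) *
      starRingEnd ℂ (extz w (m : ℤ))) with hG6
    set G7 : ℕ → ℂ := fun m => ((kwav k0 lam m ^ 2 : ℝ) : ℂ) * ((a : ℂ) *
      (kz k0 lam (m : ℤ) : ℂ) * extz w (m : ℤ) * extz u ((m : ℤ) - 1)) with hG7
    set G8 : ℕ → ℂ := fun m => ((kwav k0 lam m ^ 2 : ℝ) : ℂ) * ((b : ℂ) *
      (kz k0 lam (m : ℤ) : ℂ) * extz u (m : ℤ) * extz w ((m : ℤ) - 1)) with hG8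
    obtain ⟨s1, b1⟩ := term_est2 hk0 hlam u w hu hw G1 a 2 2 3
      (by intro m; simp only [hG1]; rw [kwav_eq_kz m]
          simp [norm_mul, Complex.norm_real, Real.norm_eq_abs, RCLike.norm_conj, habs,
            abs_pow]
          ring)
      (by intro m; omega)
    obtain ⟨s2, b2⟩ := term_est2 hk0 hlam u w hu hw G2 b 1 0 2
      (by intro m; simp only [hG2]; rw [kwav_eq_kz m, show (m : ℤ) + 0 = (m : ℤ) by ring]
          simp [norm_mul, Complex.norm_real, Real.norm_eq_abs, RCLike.norm_conj, habs,
            abs_pow]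
          ring)
      (by intro m; omega)
    obtain ⟨s3, b3⟩ := term_est2 hk0 hlam u w hu hw G3 a 0 0 (-1)
      (by intro m; simp only [hG3]; rw [kwav_eq_kz m, show (m : ℤ) + 0 = (m : ℤ) by ring,
            show (m : ℤ) + (-1) = (m : ℤ) - 1 by ring]
          simp [norm_mul, Complex.norm_real, Real.norm_eq_abs, RCLike.norm_conj, habs,
            abs_pow]
          ring)
      (by intro m; omega)
    obtain ⟨s4, b4⟩ := term_est2 hk0 hlam u w hu hw G4 b 0 (-1) 0
      (by intro m; simp only [hG4]; rw [kwav_eq_kz m, show (m : ℤ) + 0 = (m : ℤ) by ring,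
            show (m : ℤ) + (-1) = (m : ℤ) - 1 by ring]
          simp [norm_mul, Complex.norm_real, Real.norm_eq_abs, RCLike.norm_conj, habs,
            abs_pow]
          ring)
      (by intro m; omega)
    obtain ⟨s5, b5⟩ := term_est2 hk0 hlam u w hu hw G5 a 2 3 2
      (by intro m; simp only [hG5]; rw [kwav_eq_kz m]
          simp [norm_mul, Complex.norm_real, Real.norm_eq_abs, RCLike.norm_conj, habs,
            abs_pow]
          ring)
      (by intro m; omega)
    obtain ⟨s6, b6⟩ := term_est2 hk0 hlam u w hu hw G6 b 1 2 0
      (by intro m; simp only [hG6]; rw [kwav_eq_kz m, show (m : ℤ) + 0 = (m : ℤ) by ring]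
          simp [norm_mul, Complex.norm_real, Real.norm_eq_abs, RCLike.norm_conj, habs,
            abs_pow]
          ring)
      (by intro m; omega)
    obtain ⟨s7, b7⟩ := term_est2 hk0 hlam u w hu hw G7 a 0 (-1) 0
      (by intro m; simp only [hG7]; rw [kwav_eq_kz m, show (m : ℤ) + 0 = (m : ℤ) by ring,
            show (m : ℤ) + (-1) = (m : ℤ) - 1 by ring]
          simp [norm_mul, Complex.norm_real, Real.norm_eq_abs, RCLike.norm_conj, habs,
            abs_pow]
          ring)
      (by intro m; omega)
    obtain ⟨s8, b8⟩ := term_est2 hk0 hlam u w hu hw G8 b 0 0 (-1)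
      (by intro m; simp only [hG8]; rw [kwav_eq_kz m, show (m : ℤ) + 0 = (m : ℤ) by ring,
            show (m : ℤ) + (-1) = (m : ℤ) - 1 by ring]
          simp [norm_mul, Complex.norm_real, Real.norm_eq_abs, RCLike.norm_conj, habs,
            abs_pow]
          ring)
      (by intro m; omega)
    have hnorm_eq : Hnorm (fun m => ((kwav k0 lam m ^ 2 : ℝ) : ℂ) *
        (fun n => sabraB a b k0 lam u w n + sabraB a b k0 lam w u n) m)
        = Hnorm (fun m => G1 m + G2 m + G3 m + G4 m + G5 m + G6 m + G7 m + G8 m) := by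
      apply Hnorm_congr
      intro m
      have hd : ((kwav k0 lam m ^ 2 : ℝ) : ℂ) *
          (sabraB a b k0 lam u w m + sabraB a b k0 lam w u m)
          = -Complex.I * (G1 m + G2 m + G3 m + G4 m + G5 m + G6 m + G7 m + G8 m) := by
        rw [hG1, hG2, hG3, hG4, hG5, hG6, hG7, hG8]
        unfold sabraB
        ring
      calc ‖((kwav k0 lam m ^ 2 : ℝ) : ℂ) *
            (fun n => sabraB a b k0 lam u w n + sabraB a b k0 lam w u n) m‖
          = ‖-Complex.I * (G1 m + G2 m + G3 m + G4 m + G5 m + G6 m + G7 m + G8 m)‖ := by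
            rw [← hd]
        _ = ‖G1 m + G2 m + G3 m + G4 m + G5 m + G6 m + G7 m + G8 m‖ := by
            rw [norm_mul]; simp
    rw [hnorm_eq]
    calc Hnorm (fun m => G1 m + G2 m + G3 m + G4 m + G5 m + G6 m + G7 m + G8 m)
        ≤ Hnorm G1 + Hnorm G2 + Hnorm G3 + Hnorm G4 + Hnorm G5 + Hnorm G6 + Hnorm G7
            + Hnorm G8 := Hnorm_add8 s1 s2 s3 s4 s5 s6 s7 s8
      _ ≤ |a| * lam ^ (4:ℤ) / k0 * DAnorm k0 lam u * DAnorm k0 lam w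
          + |b| * lam ^ (4:ℤ) / k0 * DAnorm k0 lam u * DAnorm k0 lam w
          + |a| * lam ^ (4:ℤ) / k0 * DAnorm k0 lam u * DAnorm k0 lam w
          + |b| * lam ^ (4:ℤ) / k0 * DAnorm k0 lam u * DAnorm k0 lam w
          + |a| * lam ^ (4:ℤ) / k0 * DAnorm k0 lam u * DAnorm k0 lam w
          + |b| * lam ^ (4:ℤ) / k0 * DAnorm k0 lam u * DAnorm k0 lam w
          + |a| * lam ^ (4:ℤ) / k0 * DAnorm k0 lam u * DAnorm k0 lam w
          + |b| * lam ^ (4:ℤ) / k0 * DAnorm k0 lam u * DAnorm k0 lam w := by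
          exact add_le_add (add_le_add (add_le_add (add_le_add (add_le_add
            (add_le_add (add_le_add b1 b2) b3) b4) b5) b6) b7) b8
      _ = ((4 * |a| + 4 * |b|) * lam ^ (4:ℤ) / k0)
            * (DAnorm k0 lam u * DAnorm k0 lam w) := by ring
      _ ≤ ((4 * |a| + 4 * |b| + 1) * lam ^ (4:ℤ) / k0)
            * (DAnorm k0 lam u * DAnorm k0 lam w) := by
          apply mul_le_mul_of_nonneg_right ?_
            (mul_nonneg (Real.sqrt_nonneg _) (Real.sqrt_nonneg _))
          have hz : (0:ℝ) < lam ^ (4:ℤ) := by positivity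
          have hnum2 : (4 * |a| + 4 * |b|) * lam ^ (4:ℤ)
              ≤ (4 * |a| + 4 * |b| + 1) * lam ^ (4:ℤ) := by nlinarith
          exact div_le_div_of_nonneg_right hnum2 hk0.le
      _ = (4 * |a| + 4 * |b| + 1) * lam ^ (4:ℤ) / k0
            * DAnorm k0 lam u * DAnorm k0 lam w := by ring


end Sabra
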